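/- arXiv:2605.22486 — 7 statements merged into one kernel-verified Lean document; each statement's English description precedes it below -/
import Mathlib

section
/- Global exponential stability of the zero dynamics (Theorem 1). Let f : E → ℝ and h : E → F₁ be continuously differentiable, let Φ : E → F₁ × F₂, Φ(x) = (h(x), q(x)), be a global C¹ diffeomorphism satisfying the orthonormality conditions, and suppose Dh(x)∘Dh(x)† is invertible for every x ∈ E. Define p(η) = Φ⁻¹(0, η) and f̃ = f ∘ p : F₂ → ℝ. Assume f̃ is ρ-strongly convex for some ρ > 0 and that η* ∈ F₂ satisfies ∇f̃(η*) = 0. Then every differentiable curve η : [0,∞) → F₂ satisfying the zero dynamics η'(t) = − Dq(p(η(t)))(∇f(p(η(t)))) for all t ≥ 0 obeys ‖η(t) − η*‖ ≤ e^{−ρ t} ‖η(0) − η*‖ for all t ≥ 0. -/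
/-!
Differentiating `Ψ ∘ Φ = id` gives `DΨ ∘ DΦ = id`, and the orthonormality conditions say that
`DΦ ∘ Dq† = inr`; hence `Dp(η) = DΨ(0, η) ∘ inr = Dq(p η)†`, and the zero dynamics is the gradient
flow `η' = -∇f̃(η)` of the reduced objective. Strong convexity makes `∇f̃` strongly monotone
around its critical point `η*`, so `‖η t - η*‖²` decays at rate `2ρ` by Grönwall's inequality.
-/

open scoped RealInnerProductSpace
open ContinuousLinearMap

section Derivatives

variable {E F : Type*} [NormedAddCommGroup E] [NormedSpace ℝ E]
  [NormedAddCommGroup F] [NormedSpace ℝ F]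

theorem HasFDerivAt.comp_eq_id_of_leftInverse {Φ : E → F} {Ψ : F → E} {A : E →L[ℝ] F}
    {B : F →L[ℝ] E} {x : E} (hΦ : HasFDerivAt Φ A x) (hΨ : HasFDerivAt Ψ B (Φ x))
    (hinv : Function.LeftInverse Ψ Φ) : B ∘L A = ContinuousLinearMap.id ℝ E :=
  (hΨ.comp x hΦ).unique (by rw [hinv.comp_eq_id]; exact hasFDerivAt_id x)

end Derivatives

section Adjoint

variable {E F₁ F₂ : Type*}
  [NormedAddCommGroup E] [InnerProductSpace ℝ E] [CompleteSpace E]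
  [NormedAddCommGroup F₁] [InnerProductSpace ℝ F₁] [CompleteSpace F₁]
  [NormedAddCommGroup F₂] [InnerProductSpace ℝ F₂] [CompleteSpace F₂]

theorem ContinuousLinearMap.prod_comp_adjoint_eq_inr {Dh : E →L[ℝ] F₁} {Dq : E →L[ℝ] F₂}
    (horth₁ : Dq ∘L adjoint Dq = ContinuousLinearMap.id ℝ F₂) (horth₂ : Dq ∘L adjoint Dh = 0) :
    Dh.prod Dq ∘L adjoint Dq = inr ℝ F₁ F₂ := by
  have hDh : Dh ∘L adjoint Dq = 0 := by
    simpa [adjoint_comp] using congrArg adjoint horth₂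
  ext v : 1
  have h₁ := DFunLike.congr_fun hDh v
  have h₂ := DFunLike.congr_fun horth₁ v
  simp only [comp_apply, zero_apply, id_apply] at h₁ h₂
  simp [h₁, h₂]

theorem ContinuousLinearMap.comp_inr_eq_adjoint {Dh : E →L[ℝ] F₁} {Dq : E →L[ℝ] F₂}
    {B : F₁ × F₂ →L[ℝ] E} (hleft : B ∘L Dh.prod Dq = ContinuousLinearMap.id ℝ E)
    (horth₁ : Dq ∘L adjoint Dq = ContinuousLinearMap.id ℝ F₂) (horth₂ : Dq ∘L adjoint Dh = 0) :
    B ∘L inr ℝ F₁ F₂ = adjoint Dq := by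
  rw [← prod_comp_adjoint_eq_inr horth₁ horth₂, ← comp_assoc, hleft, id_comp]

theorem HasGradientAt.comp_of_hasFDerivAt_adjoint {f : E → ℝ} {p : F₂ → E} {L : E →L[ℝ] F₂}
    {g : E} {u : F₂} (hf : HasGradientAt f g (p u)) (hp : HasFDerivAt p (adjoint L) u) :
    HasGradientAt (f ∘ p) (L g) u := by
  rw [hasGradientAt_iff_hasFDerivAt]
  refine (hf.hasFDerivAt.comp u hp).congr_fderiv (ContinuousLinearMap.ext fun v => ?_)
  simp only [comp_apply, InnerProductSpace.toDual_apply_apply]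
  exact adjoint_inner_right L g v

variable {h : E → F₁} {q : E → F₂} {Ψ : F₁ × F₂ → E}

theorem hasFDerivAt_inverse_zero_slice (hh : Differentiable ℝ h) (hq : Differentiable ℝ q)
    (hΨ : Differentiable ℝ Ψ) (hleft : ∀ x, Ψ (h x, q x) = x)
    (hright : ∀ p, (h (Ψ p), q (Ψ p)) = p)
    (horth₁ : ∀ x, fderiv ℝ q x ∘L adjoint (fderiv ℝ q x) = ContinuousLinearMap.id ℝ F₂)
    (horth₂ : ∀ x, fderiv ℝ q x ∘L adjoint (fderiv ℝ h x) = 0) (u : F₂) :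
    HasFDerivAt (fun η => Ψ (0, η)) (adjoint (fderiv ℝ q (Ψ (0, u)))) u := by
  set x := Ψ (0, u)
  have hΦ : HasFDerivAt (fun y => (h y, q y)) ((fderiv ℝ h x).prod (fderiv ℝ q x)) x :=
    (hh x).hasFDerivAt.prodMk (hq x).hasFDerivAt
  have hΨx : HasFDerivAt Ψ (fderiv ℝ Ψ (0, u)) (h x, q x) := by
    rw [hright]; exact (hΨ _).hasFDerivAt
  have hDΨ := hΦ.comp_eq_id_of_leftInverse hΨx hleft
  rw [← comp_inr_eq_adjoint hDΨ (horth₁ x) (horth₂ x)]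
  exact (hΨ _).hasFDerivAt.comp u (hasFDerivAt_prodMk_right 0 u)

theorem gradient_comp_inverse_zero_slice {f : E → ℝ} (hf : Differentiable ℝ f)
    (hh : Differentiable ℝ h) (hq : Differentiable ℝ q)
    (hΨ : Differentiable ℝ Ψ) (hleft : ∀ x, Ψ (h x, q x) = x)
    (hright : ∀ p, (h (Ψ p), q (Ψ p)) = p)
    (horth₁ : ∀ x, fderiv ℝ q x ∘L adjoint (fderiv ℝ q x) = ContinuousLinearMap.id ℝ F₂)
    (horth₂ : ∀ x, fderiv ℝ q x ∘L adjoint (fderiv ℝ h x) = 0) (u : F₂) :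
    gradient (fun η => f (Ψ (0, η))) u = fderiv ℝ q (Ψ (0, u)) (gradient f (Ψ (0, u))) :=
  ((hf _).hasGradientAt.comp_of_hasFDerivAt_adjoint
    (hasFDerivAt_inverse_zero_slice hh hq hΨ hleft hright horth₁ horth₂ u)).gradient

end Adjoint

section GradientFlow

variable {F : Type*} [NormedAddCommGroup F] [InnerProductSpace ℝ F]

theorem mul_sq_norm_sub_le_inner_of_strongConvex {g : F → ℝ} {G : F → F} {ρ : ℝ}
    (hconv : ∀ u v, g v ≥ g u + ⟪G u, v - u⟫ + (ρ / 2) * ‖v - u‖ ^ 2) {x : F} (hcrit : G x = 0)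
    (u : F) : ρ * ‖u - x‖ ^ 2 ≤ ⟪G u, u - x⟫ := by
  have h₁ := hconv u x
  have h₂ := hconv x u
  rw [hcrit, inner_zero_left] at h₂
  rw [← neg_sub u x, inner_neg_right, norm_neg] at h₁
  linarith

theorem sq_norm_sub_le_of_hasDerivAt_neg {G : F → F} {ρ : ℝ} {x : F}
    (hmono : ∀ u, ρ * ‖u - x‖ ^ 2 ≤ ⟪G u, u - x⟫) {η : ℝ → F}
    (hη : ∀ t, 0 ≤ t → HasDerivAt η (-G (η t)) t) {t : ℝ} (ht : 0 ≤ t) :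
    ‖η t - x‖ ^ 2 ≤ ‖η 0 - x‖ ^ 2 * Real.exp (-(2 * ρ) * t) := by
  have hderiv : ∀ s, 0 ≤ s →
      HasDerivAt (fun s => ‖η s - x‖ ^ 2) (-(2 * ⟪G (η s), η s - x⟫)) s := by
    intro s hs
    convert ((hη s hs).sub_const x).norm_sq using 1
    rw [inner_neg_right, real_inner_comm]
    ring
  have := le_gronwallBound_of_liminf_deriv_right_le (f := fun s => ‖η s - x‖ ^ 2) (ε := 0)
    (K := -(2 * ρ)) (a := 0) (b := t)
    (fun s hs => (hderiv s hs.1).continuousAt.continuousWithinAt)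
    (fun s hs _ hr => (hderiv s hs.1).hasDerivWithinAt.liminf_right_slope_le hr) le_rfl
    (fun s _ => by linarith [hmono (η s)]) t ⟨ht, le_rfl⟩
  rwa [gronwallBound_ε0, sub_zero] at this

theorem norm_sub_le_exp_mul_of_hasDerivAt_neg {G : F → F} {ρ : ℝ} {x : F}
    (hmono : ∀ u, ρ * ‖u - x‖ ^ 2 ≤ ⟪G u, u - x⟫) {η : ℝ → F}
    (hη : ∀ t, 0 ≤ t → HasDerivAt η (-G (η t)) t) {t : ℝ} (ht : 0 ≤ t) :
    ‖η t - x‖ ≤ Real.exp (-ρ * t) * ‖η 0 - x‖ := by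
  refine le_of_sq_le_sq ?_ (by positivity)
  calc ‖η t - x‖ ^ 2 ≤ ‖η 0 - x‖ ^ 2 * Real.exp (-(2 * ρ) * t) :=
        sq_norm_sub_le_of_hasDerivAt_neg hmono hη ht
    _ = (Real.exp (-ρ * t) * ‖η 0 - x‖) ^ 2 := by
        rw [mul_pow, ← Real.exp_nat_mul]; ring_nf

end GradientFlow

theorem zero_dynamics_global_exponential_stability_general
    (n m : ℕ)
    (f : EuclideanSpace ℝ (Fin n) → ℝ)
    (h : EuclideanSpace ℝ (Fin n) → EuclideanSpace ℝ (Fin m))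
    (q : EuclideanSpace ℝ (Fin n) → EuclideanSpace ℝ (Fin (n - m)))
    (Ψ : EuclideanSpace ℝ (Fin m) × EuclideanSpace ℝ (Fin (n - m)) → EuclideanSpace ℝ (Fin n))
    (hf : ContDiff ℝ 1 f) (hh : ContDiff ℝ 1 h) (hq : ContDiff ℝ 1 q)
    (hΨ : ContDiff ℝ 1 Ψ)
    (hleft : ∀ x, Ψ (h x, q x) = x)
    (hright : ∀ p, (h (Ψ p), q (Ψ p)) = p)
    (horth₁ : ∀ x, (fderiv ℝ q x) ∘L (ContinuousLinearMap.adjoint (fderiv ℝ q x))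
      = ContinuousLinearMap.id ℝ (EuclideanSpace ℝ (Fin (n - m))))
    (horth₂ : ∀ x, (fderiv ℝ q x) ∘L (ContinuousLinearMap.adjoint (fderiv ℝ h x)) = 0)
    (ρ : ℝ)
    (hconv : ∀ u v : EuclideanSpace ℝ (Fin (n - m)),
      f (Ψ (0, v)) ≥ f (Ψ (0, u)) + ⟪gradient (fun η => f (Ψ (0, η))) u, v - u⟫
        + (ρ / 2) * ‖v - u‖ ^ 2)
    (ηstar : EuclideanSpace ℝ (Fin (n - m)))
    (hcrit : gradient (fun η => f (Ψ (0, η))) ηstar = 0)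
    (η : ℝ → EuclideanSpace ℝ (Fin (n - m)))
    (hdyn : ∀ t, 0 ≤ t →
      HasDerivAt η (-(fderiv ℝ q (Ψ (0, η t))) (gradient f (Ψ (0, η t)))) t) :
    ∀ t, 0 ≤ t → ‖η t - ηstar‖ ≤ Real.exp (-ρ * t) * ‖η 0 - ηstar‖ := by
  have hgrad := gradient_comp_inverse_zero_slice (hf.differentiable one_ne_zero)
    (hh.differentiable one_ne_zero) (hq.differentiable one_ne_zero)
    (hΨ.differentiable one_ne_zero) hleft hright horth₁ horth₂
  have hflow : ∀ t, 0 ≤ t →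
      HasDerivAt η (-gradient (fun η => f (Ψ (0, η))) (η t)) t := fun t ht => by
    rw [hgrad]; exact hdyn t ht
  exact fun t ht => norm_sub_le_exp_mul_of_hasDerivAt_neg
    (mul_sq_norm_sub_le_inner_of_strongConvex hconv hcrit) hflow ht

/-- Theorem 1: Global exponential stability of the zero dynamics.
`E = ℝⁿ`, `F₁ = ℝᵐ`, `F₂ = ℝ^{n-m}`; `Φ = (h, q)` is a global C¹ diffeomorphism with
inverse `Ψ`, satisfying the orthonormality conditions, `Dh ∘ Dh†` invertible; with
`p η = Ψ (0, η)` and `f̃ = f ∘ p` being `ρ`-strongly convex with critical point `η*`,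
every solution of the zero dynamics converges exponentially to `η*` with rate `ρ`. -/
theorem zero_dynamics_global_exponential_stability
    (n m : ℕ) (hm : 1 ≤ m) (hmn : m < n)
    (f : EuclideanSpace ℝ (Fin n) → ℝ)
    (h : EuclideanSpace ℝ (Fin n) → EuclideanSpace ℝ (Fin m))
    (q : EuclideanSpace ℝ (Fin n) → EuclideanSpace ℝ (Fin (n - m)))
    (Ψ : EuclideanSpace ℝ (Fin m) × EuclideanSpace ℝ (Fin (n - m)) → EuclideanSpace ℝ (Fin n))
    (hf : ContDiff ℝ 1 f) (hh : ContDiff ℝ 1 h) (hq : ContDiff ℝ 1 q)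
    (hΨ : ContDiff ℝ 1 Ψ)
    (hleft : ∀ x, Ψ (h x, q x) = x)
    (hright : ∀ p, (h (Ψ p), q (Ψ p)) = p)
    (horth₁ : ∀ x, (fderiv ℝ q x) ∘L (ContinuousLinearMap.adjoint (fderiv ℝ q x))
      = ContinuousLinearMap.id ℝ (EuclideanSpace ℝ (Fin (n - m))))
    (horth₂ : ∀ x, (fderiv ℝ q x) ∘L (ContinuousLinearMap.adjoint (fderiv ℝ h x)) = 0)
    (hinv : ∀ x, IsUnit ((fderiv ℝ h x) ∘L (ContinuousLinearMap.adjoint (fderiv ℝ h x))))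
    (ρ : ℝ) (hρ : 0 < ρ)
    (hconv : ∀ u v : EuclideanSpace ℝ (Fin (n - m)),
      f (Ψ (0, v)) ≥ f (Ψ (0, u)) + ⟪gradient (fun η => f (Ψ (0, η))) u, v - u⟫
        + (ρ / 2) * ‖v - u‖ ^ 2)
    (ηstar : EuclideanSpace ℝ (Fin (n - m)))
    (hcrit : gradient (fun η => f (Ψ (0, η))) ηstar = 0)
    (η : ℝ → EuclideanSpace ℝ (Fin (n - m)))
    (hdyn : ∀ t, 0 ≤ t →
      HasDerivAt η (-(fderiv ℝ q (Ψ (0, η t))) (gradient f (Ψ (0, η t)))) t) :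
    ∀ t, 0 ≤ t → ‖η t - ηstar‖ ≤ Real.exp (-ρ * t) * ‖η 0 - ηstar‖ :=
  zero_dynamics_global_exponential_stability_general n m f h q Ψ hf hh hq hΨ hleft hright horth₁
    horth₂ ρ hconv ηstar hcrit η hdyn
end

section
/- ISS of the perturbed gradient flow with exponentially vanishing disturbance (key estimate in the proof of Theorem 2). Let F be a finite-dimensional real inner product space, let g : F → ℝ be differentiable and ρ-strongly convex with ∇g(η*) = 0 for some η* ∈ F and ρ > 0. Let δ : [0,∞) → F be continuous with ‖δ(t)‖ ≤ D e^{−β t} for all t ≥ 0, where D ≥ 0 and β > 0. If η : [0,∞) → F is differentiable with η'(t) = −∇g(η(t)) + δ(t) for all t ≥ 0, then for every ρ₁ with 0 < ρ₁ < min{ρ, β} there exists a constant M > 0, depending only on ρ, β, ρ₁, such that ‖η(t) − η*‖ ≤ e^{−ρ₁ t} ( ‖η(0) − η*‖ + M·D ) for all t ≥ 0. -/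
/-!
Strong convexity makes `∇g` strongly monotone, so `⟪∇g x, x - η*⟫ ≥ ρ ‖x - η*‖²`. Hence along the
flow `w = η - η*` satisfies `⟪w, w'⟫ ≤ -ρ ‖w‖² + D e^{-βs} ‖w‖`, and `‖w‖` stays below every
solution `B > 0` of the comparison equation `B' = -ρ₁ B + D e^{-βs}` with `B 0 > ‖w 0‖`: at a first
contact `‖w‖ = B` the margin `ρ - ρ₁ > 0` makes `‖w‖²` decrease strictly faster than `B²`.
These solutions are `(r + K) e^{-ρ₁ s} - K e^{-βs}` with `K = D / (β - ρ₁)`, and letting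
`r ↓ ‖w 0‖` gives the estimate with `M = 1 / (β - ρ₁)`.
-/

open Set Real Filter Topology
open scoped RealInnerProductSpace

noncomputable def expBarrier (ρ₁ β r K s : ℝ) : ℝ :=
  (r + K) * exp (-ρ₁ * s) - K * exp (-β * s)

theorem hasDerivAt_expBarrier (ρ₁ β r K s : ℝ) :
    HasDerivAt (expBarrier ρ₁ β r K)
      (-ρ₁ * expBarrier ρ₁ β r K s + (β - ρ₁) * K * exp (-β * s)) s := by
  have hexp : ∀ c : ℝ, HasDerivAt (fun s => exp (c * s)) (c * exp (c * s)) s := fun c => by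
    simpa [mul_comm] using ((hasDerivAt_id s).const_mul c).exp
  refine (((hexp (-ρ₁)).const_mul (r + K)).fun_sub ((hexp (-β)).const_mul K)).congr_deriv ?_
  unfold expBarrier
  ring

theorem expBarrier_pos {ρ₁ β r K s : ℝ} (hρ₁β : ρ₁ ≤ β) (hr : 0 < r) (hK : 0 ≤ K) (hs : 0 ≤ s) :
    0 < expBarrier ρ₁ β r K s := by
  have hexp : exp (-β * s) ≤ exp (-ρ₁ * s) := exp_le_exp.2 (by nlinarith)
  have : 0 < r * exp (-ρ₁ * s) := by positivity
  unfold expBarrier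
  nlinarith

section InnerProductSpace

variable {F : Type*} [NormedAddCommGroup F] [InnerProductSpace ℝ F]

theorem mul_norm_sub_sq_le_inner_gradient_sub_gradient [CompleteSpace F] {g : F → ℝ} {ρ : ℝ}
    (hg : ∀ u v : F, g v ≥ g u + ⟪gradient g u, v - u⟫ + (ρ / 2) * ‖v - u‖ ^ 2) (x y : F) :
    ρ * ‖x - y‖ ^ 2 ≤ ⟪gradient g x - gradient g y, x - y⟫ := by
  have hxy := hg x y
  have hyx := hg y x
  rw [norm_sub_rev y x] at hxy
  have hswap : ⟪gradient g x, y - x⟫ = -⟪gradient g x, x - y⟫ := by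
    rw [← inner_neg_right, neg_sub]
  rw [inner_sub_left]
  linarith

theorem norm_le_of_inner_deriv_right_lt_deriv_boundary {u u' : ℝ → F} {B B' : ℝ → ℝ} {a b : ℝ}
    (hu : ContinuousOn u (Icc a b)) (hu' : ∀ x ∈ Ico a b, HasDerivWithinAt u (u' x) (Ici x) x)
    (hB : ∀ x, HasDerivAt B (B' x) x) (hB_nonneg : ∀ x ∈ Icc a b, 0 ≤ B x) (ha : ‖u a‖ ≤ B a)
    (bound : ∀ x ∈ Ico a b, ‖u x‖ = B x → ⟪u x, u' x⟫ < B x * B' x) :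
    ∀ ⦃x⦄, x ∈ Icc a b → ‖u x‖ ≤ B x := by
  have hsq : ∀ ⦃x⦄, x ∈ Icc a b → ‖u x‖ ^ 2 ≤ B x ^ 2 :=
    image_le_of_deriv_right_lt_deriv_boundary (B := fun x => B x ^ 2)
      (B' := fun x => 2 * B x * B' x) (hu.norm.pow 2) (fun x hx => (hu' x hx).norm_sq)
      (pow_le_pow_left₀ (norm_nonneg _) ha 2) (fun x => by simpa using (hB x).fun_pow 2)
      fun x hx hx_eq => by
        have hcontact : ‖u x‖ = B x :=
          (pow_left_inj₀ (norm_nonneg _) (hB_nonneg x (Ico_subset_Icc_self hx)) two_ne_zero).1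
            hx_eq
        linarith [bound x hx hcontact]
  exact fun x hx => (pow_le_pow_iff_left₀ (norm_nonneg _) (hB_nonneg x hx) two_ne_zero).1 (hsq hx)

theorem norm_sub_le_of_hasDerivAt_neg_add {G : F → F} {x₀ : F} {ρ ρ₁ β D r t : ℝ}
    (hρ₁ρ : ρ₁ < ρ) (hρ₁β : ρ₁ < β) (hG : ∀ x, ρ * ‖x - x₀‖ ^ 2 ≤ ⟪G x, x - x₀⟫) (hD : 0 ≤ D)
    {δ : ℝ → F} (hδ : ∀ s, 0 ≤ s → ‖δ s‖ ≤ D * exp (-β * s))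
    {η : ℝ → F} (hη : ∀ s, 0 ≤ s → HasDerivAt η (-G (η s) + δ s) s)
    (hr : ‖η 0 - x₀‖ < r) (ht : 0 ≤ t) :
    ‖η t - x₀‖ ≤ exp (-ρ₁ * t) * (r + D / (β - ρ₁)) := by
  set K := D / (β - ρ₁)
  have hK : 0 ≤ K := div_nonneg hD (sub_pos.2 hρ₁β).le
  have hK_mul : (β - ρ₁) * K = D := mul_div_cancel₀ D (sub_pos.2 hρ₁β).ne'
  have hr_pos : 0 < r := (norm_nonneg _).trans_lt hr
  have hB_pos : ∀ s, 0 ≤ s → 0 < expBarrier ρ₁ β r K s := fun s hs =>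
    expBarrier_pos hρ₁β.le hr_pos hK hs
  have hη_sub : ∀ s, 0 ≤ s → HasDerivAt (fun s => η s - x₀) (-G (η s) + δ s) s := fun s hs =>
    (hη s hs).sub_const x₀
  have hcontact_rate : ∀ s, 0 ≤ s → ‖η s - x₀‖ = expBarrier ρ₁ β r K s →
      ⟪η s - x₀, -G (η s) + δ s⟫ <
        expBarrier ρ₁ β r K s * (-ρ₁ * expBarrier ρ₁ β r K s + D * exp (-β * s)) := by
    intro s hs hcontact
    set B := expBarrier ρ₁ β r K s
    have hBs := hB_pos s hs
    have hδw : ⟪η s - x₀, δ s⟫ ≤ D * exp (-β * s) * B :=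
      (real_inner_le_norm _ _).trans (by
        rw [hcontact, mul_comm]; exact mul_le_mul_of_nonneg_right (hδ s hs) hBs.le)
    have hGw := hG (η s)
    rw [hcontact, real_inner_comm] at hGw
    rw [inner_add_right, inner_neg_right]
    nlinarith [mul_pos (sub_pos.2 hρ₁ρ) (mul_pos hBs hBs)]
  have hle := norm_le_of_inner_deriv_right_lt_deriv_boundary (a := 0) (b := t)
    (u := fun s => η s - x₀) (B' := fun s => -ρ₁ * expBarrier ρ₁ β r K s + D * exp (-β * s))
    (fun s hs => (hη_sub s hs.1).continuousAt.continuousWithinAt)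
    (fun s hs => (hη_sub s hs.1).hasDerivWithinAt)
    (fun s => by simpa only [hK_mul] using hasDerivAt_expBarrier ρ₁ β r K s)
    (fun s hs => (hB_pos s hs.1).le) (by simpa [expBarrier] using hr.le)
    (fun s hs => hcontact_rate s hs.1)
    ⟨ht, le_rfl⟩
  calc ‖η t - x₀‖ ≤ expBarrier ρ₁ β r K t := hle
    _ ≤ exp (-ρ₁ * t) * (r + K) := by
      unfold expBarrier
      nlinarith [mul_nonneg hK (exp_pos (-β * t)).le]

end InnerProductSpace

theorem iss_perturbed_gradient_flow_general
    {F : Type*} [NormedAddCommGroup F] [InnerProductSpace ℝ F] [FiniteDimensional ℝ F]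
    (ρ β ρ₁ : ℝ) (hρ₁' : ρ₁ < min ρ β) :
    ∃ M : ℝ, 0 < M ∧
      ∀ g : F → ℝ, Differentiable ℝ g →
      ∀ ηstar : F, gradient g ηstar = 0 →
      (∀ u v : F, g v ≥ g u + ⟪gradient g u, v - u⟫ + (ρ / 2) * ‖v - u‖ ^ 2) →
      ∀ D : ℝ, 0 ≤ D →
      ∀ δ : ℝ → F, ContinuousOn δ (Set.Ici (0 : ℝ)) →
      (∀ t, 0 ≤ t → ‖δ t‖ ≤ D * Real.exp (-β * t)) →
      ∀ η : ℝ → F,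
      (∀ t, 0 ≤ t → HasDerivAt η (-gradient g (η t) + δ t) t) →
      ∀ t, 0 ≤ t → ‖η t - ηstar‖ ≤ Real.exp (-ρ₁ * t) * (‖η 0 - ηstar‖ + M * D) := by
  have hρ₁ρ : ρ₁ < ρ := hρ₁'.trans_le (min_le_left _ _)
  have hρ₁β : ρ₁ < β := hρ₁'.trans_le (min_le_right _ _)
  refine ⟨(β - ρ₁)⁻¹, inv_pos.2 (sub_pos.2 hρ₁β), ?_⟩
  intro g _ ηstar hgrad hsc D hD δ _ hδ η hη t ht
  have hmono : ∀ x, ρ * ‖x - ηstar‖ ^ 2 ≤ ⟪gradient g x, x - ηstar⟫ := fun x => by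
    simpa [hgrad] using mul_norm_sub_sq_le_inner_gradient_sub_gradient hsc x ηstar
  have hcont : Continuous fun r => exp (-ρ₁ * t) * (r + D / (β - ρ₁)) := by fun_prop
  have hlim := (hcont.continuousWithinAt (s := Ioi ‖η 0 - ηstar‖) (x := ‖η 0 - ηstar‖)).tendsto
  rw [inv_mul_eq_div]
  exact ge_of_tendsto hlim (eventually_nhdsWithin_of_forall fun r hr =>
    norm_sub_le_of_hasDerivAt_neg_add hρ₁ρ hρ₁β hmono hD hδ hη hr ht)

/-- ISS of the perturbed gradient flow with exponentially vanishing
disturbance. For `ρ`-strongly convex `g` with `∇g(η*) = 0`, disturbance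
`‖δ(t)‖ ≤ D e^{-βt}`, and `η' = -∇g(η) + δ`, for every `0 < ρ₁ < min{ρ, β}` there is a
constant `M > 0` depending only on `ρ, β, ρ₁` with
`‖η(t) - η*‖ ≤ e^{-ρ₁ t} (‖η(0) - η*‖ + M D)`. -/
theorem iss_perturbed_gradient_flow
    {F : Type*} [NormedAddCommGroup F] [InnerProductSpace ℝ F] [FiniteDimensional ℝ F]
    (ρ β ρ₁ : ℝ) (hρ : 0 < ρ) (hβ : 0 < β) (hρ₁ : 0 < ρ₁) (hρ₁' : ρ₁ < min ρ β) :
    ∃ M : ℝ, 0 < M ∧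
      ∀ g : F → ℝ, Differentiable ℝ g →
      ∀ ηstar : F, gradient g ηstar = 0 →
      (∀ u v : F, g v ≥ g u + ⟪gradient g u, v - u⟫ + (ρ / 2) * ‖v - u‖ ^ 2) →
      ∀ D : ℝ, 0 ≤ D →
      ∀ δ : ℝ → F, ContinuousOn δ (Set.Ici (0 : ℝ)) →
      (∀ t, 0 ≤ t → ‖δ t‖ ≤ D * Real.exp (-β * t)) →
      ∀ η : ℝ → F,
      (∀ t, 0 ≤ t → HasDerivAt η (-gradient g (η t) + δ t) t) →
      ∀ t, 0 ≤ t → ‖η t - ηstar‖ ≤ Real.exp (-ρ₁ * t) * (‖η 0 - ηstar‖ + M * D) :=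
  iss_perturbed_gradient_flow_general ρ β ρ₁ hρ₁'
end

section
/- Lipschitz bound on the nonlinear residual r (Lemma 1 with the explicit constants of Appendix Lemma 2). Let f : E → ℝ and h : E → F₁ be continuously differentiable, let Φ : E → F₁ × F₂, Φ(x) = (h(x), q(x)), be a global C¹ diffeomorphism, and assume: (i) there exists m̲ > 0 with ⟨Dh(x)†v, Dh(x)†v⟩ ≥ m̲‖v‖² for all x, v, so Dh(x)∘Dh(x)† is invertible; (ii) ‖Dh(x)∘Dh(x)†‖ ≤ m̄ for all x ∈ E; (iii) the map φ(x) = −(Dh(x)∘Dh(x)†)⁻¹( Dh(x)(∇f(x)) ) is globally Lipschitz with constant L₂; (iv) Φ⁻¹ is globally Lipschitz with constant L_Ψ. Fix η* ∈ F₂, let x* = Φ⁻¹(0, η*) and λ* = φ(x*). Define, for (y,η) ∈ F₁ × F₂ and x̃ = Φ⁻¹(y,η), the residual r(η, y) = Dh(x̃)(∇f(x̃)) + (Dh(x̃)∘Dh(x̃)†)(λ*). Then ‖r(η, y)‖ ≤ m̄ L₂ L_Ψ ( ‖y‖ + ‖η − η*‖ ) for all (y, η) ∈ F₁ × F₂.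 -/
/-!
With `G x = Dh(x) ∘ Dh(x)†` and `φ x = -G(x)⁻¹ Dh(x) ∇f(x)`, the residual at `x̃` is
`G x̃ (λ* - φ x̃) = G x̃ (φ x* - φ x̃)`, so its norm is at most `m̄ L₂ ‖x* - x̃‖`, and
`‖x* - x̃‖ = ‖Ψ (0, η*) - Ψ (y, η)‖ ≤ L_Ψ √(‖y‖² + ‖η - η*‖²) ≤ L_Ψ (‖y‖ + ‖η - η*‖)`.
The Lipschitz constants are nonnegative because the spaces involved are nontrivial.
-/

open scoped RealInnerProductSpace

section

variable {𝕜 F : Type*} [NontriviallyNormedField 𝕜] [NormedAddCommGroup F] [NormedSpace 𝕜 F]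

theorem ContinuousLinearMap.apply_ring_inverse_apply {G : F →L[𝕜] F} (hG : IsUnit G) (v : F) :
    G (Ring.inverse G v) = v :=
  DFunLike.congr_fun (Ring.mul_inverse_cancel G hG) v

theorem ContinuousLinearMap.norm_add_apply_le_of_isUnit {G : F →L[𝕜] F} (hG : IsUnit G) (v w : F) :
    ‖v + G w‖ ≤ ‖G‖ * ‖w - -Ring.inverse G v‖ := by
  have hres : v + G w = G (w - -Ring.inverse G v) := by
    rw [map_sub, map_neg, apply_ring_inverse_apply hG, sub_neg_eq_add, add_comm]
  exact hres ▸ G.le_opNorm _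

end

theorem nonneg_of_forall_norm_sub_le_mul {E F : Type*} [NormedAddCommGroup E] [Nontrivial E]
    [SeminormedAddCommGroup F] {g : E → F} {L : ℝ}
    (hg : ∀ x y, ‖g x - g y‖ ≤ L * ‖x - y‖) : 0 ≤ L := by
  obtain ⟨x, hx⟩ := exists_ne (0 : E)
  refine nonneg_of_mul_nonneg_left ((norm_nonneg _).trans (hg x 0)) ?_
  simpa using hx

theorem Real.sqrt_sq_add_sq_le_add {a b : ℝ} (ha : 0 ≤ a) (hb : 0 ≤ b) :
    √(a ^ 2 + b ^ 2) ≤ a + b :=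
  Real.sqrt_le_iff.2 ⟨by positivity, by nlinarith [mul_nonneg ha hb]⟩

theorem norm_sub_le_mul_add_of_forall_norm_sub_le_mul_sqrt {F₁ F₂ X : Type*}
    [NormedAddCommGroup F₁] [Nontrivial F₁] [SeminormedAddCommGroup F₂]
    [SeminormedAddCommGroup X] {Ψ : F₁ × F₂ → X} {L : ℝ}
    (hΨ : ∀ p p' : F₁ × F₂, ‖Ψ p - Ψ p'‖ ≤ L * √(‖p.1 - p'.1‖ ^ 2 + ‖p.2 - p'.2‖ ^ 2))
    (p p' : F₁ × F₂) : ‖Ψ p - Ψ p'‖ ≤ L * (‖p.1 - p'.1‖ + ‖p.2 - p'.2‖) := by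
  have hL : 0 ≤ L :=
    nonneg_of_forall_norm_sub_le_mul (g := fun x : F₁ ↦ Ψ (x, 0)) fun x y ↦ by
      simpa [Real.sqrt_sq (norm_nonneg _)] using hΨ (x, 0) (y, 0)
  exact (hΨ p p').trans
    (mul_le_mul_of_nonneg_left (Real.sqrt_sq_add_sq_le_add (norm_nonneg _) (norm_nonneg _)) hL)

theorem residual_lipschitz_bound_general
    (n m : ℕ) (hm : 1 ≤ m) (hmn : m < n)
    (f : EuclideanSpace ℝ (Fin n) → ℝ)
    (h : EuclideanSpace ℝ (Fin n) → EuclideanSpace ℝ (Fin m))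
    (Ψ : EuclideanSpace ℝ (Fin m) × EuclideanSpace ℝ (Fin (n - m)) → EuclideanSpace ℝ (Fin n))
    -- (i) uniform full rank
    (hinv : ∀ x, IsUnit ((fderiv ℝ h x) ∘L (ContinuousLinearMap.adjoint (fderiv ℝ h x))))
    -- (ii) uniform upper bound on the Gram map
    (mup : ℝ)
    (hmup : ∀ x, ‖(fderiv ℝ h x) ∘L (ContinuousLinearMap.adjoint (fderiv ℝ h x))‖ ≤ mup)
    -- (iii) the least-squares multiplier map φ is globally Lipschitz with constant L₂
    (L₂ : ℝ)
    (hφLip : ∀ x₁ x₂ : EuclideanSpace ℝ (Fin n),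
      ‖(-(Ring.inverse ((fderiv ℝ h x₁) ∘L (ContinuousLinearMap.adjoint (fderiv ℝ h x₁)))
            ((fderiv ℝ h x₁) (gradient f x₁))))
        - (-(Ring.inverse ((fderiv ℝ h x₂) ∘L (ContinuousLinearMap.adjoint (fderiv ℝ h x₂)))
            ((fderiv ℝ h x₂) (gradient f x₂))))‖ ≤ L₂ * ‖x₁ - x₂‖)
    -- (iv) Φ⁻¹ globally Lipschitz with constant L_Ψ (ℓ² product norm)
    (LΨ : ℝ)
    (hΨLip : ∀ p p' : EuclideanSpace ℝ (Fin m) × EuclideanSpace ℝ (Fin (n - m)),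
      ‖Ψ p - Ψ p'‖ ≤ LΨ * Real.sqrt (‖p.1 - p'.1‖ ^ 2 + ‖p.2 - p'.2‖ ^ 2))
    (ηstar : EuclideanSpace ℝ (Fin (n - m)))
    (xstar : EuclideanSpace ℝ (Fin n)) (hxstar : xstar = Ψ (0, ηstar))
    (lamstar : EuclideanSpace ℝ (Fin m))
    (hlamstar : lamstar = -(Ring.inverse ((fderiv ℝ h xstar) ∘L (ContinuousLinearMap.adjoint (fderiv ℝ h xstar)))
      ((fderiv ℝ h xstar) (gradient f xstar)))) :
    ∀ (y : EuclideanSpace ℝ (Fin m)) (η : EuclideanSpace ℝ (Fin (n - m))),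
      ‖(fderiv ℝ h (Ψ (y, η))) (gradient f (Ψ (y, η)))
        + ((fderiv ℝ h (Ψ (y, η))) ∘L (ContinuousLinearMap.adjoint (fderiv ℝ h (Ψ (y, η))))) lamstar‖
      ≤ mup * L₂ * LΨ * (‖y‖ + ‖η - ηstar‖) := by
  intro y η
  have : NeZero n := ⟨by omega⟩
  have : NeZero m := ⟨by omega⟩
  set xt := Ψ (y, η)
  have hL₂ : 0 ≤ L₂ := nonneg_of_forall_norm_sub_le_mul hφLip
  have hΨ : ‖xstar - xt‖ ≤ LΨ * (‖y‖ + ‖η - ηstar‖) := by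
    simpa [hxstar, norm_sub_rev ηstar] using
      norm_sub_le_mul_add_of_forall_norm_sub_le_mul_sqrt hΨLip (0, ηstar) (y, η)
  have hmup₀ : 0 ≤ mup := (norm_nonneg _).trans (hmup xt)
  calc _ ≤ ‖_‖ * ‖lamstar - _‖ := ContinuousLinearMap.norm_add_apply_le_of_isUnit (hinv xt) _ _
    _ ≤ mup * (L₂ * ‖xstar - xt‖) := by
        gcongr
        exacts [hmup xt, hlamstar ▸ hφLip xstar xt]
    _ ≤ mup * (L₂ * (LΨ * (‖y‖ + ‖η - ηstar‖))) := by gcongr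
    _ = mup * L₂ * LΨ * (‖y‖ + ‖η - ηstar‖) := by ring

/-- Lemma 1 with the explicit constants of Appendix Lemma 2:
Lipschitz bound on the nonlinear residual
`r(η, y) = Dh(x̃)(∇f(x̃)) + (Dh(x̃)∘Dh(x̃)†)(λ*)`, `x̃ = Φ⁻¹(y, η)`:
`‖r(η,y)‖ ≤ m̄ L₂ L_Ψ (‖y‖ + ‖η - η*‖)`. -/
theorem residual_lipschitz_bound
    (n m : ℕ) (hm : 1 ≤ m) (hmn : m < n)
    (f : EuclideanSpace ℝ (Fin n) → ℝ)
    (h : EuclideanSpace ℝ (Fin n) → EuclideanSpace ℝ (Fin m))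
    (q : EuclideanSpace ℝ (Fin n) → EuclideanSpace ℝ (Fin (n - m)))
    (Ψ : EuclideanSpace ℝ (Fin m) × EuclideanSpace ℝ (Fin (n - m)) → EuclideanSpace ℝ (Fin n))
    (hf : ContDiff ℝ 1 f) (hh : ContDiff ℝ 1 h) (hq : ContDiff ℝ 1 q)
    (hΨ : ContDiff ℝ 1 Ψ)
    (hleft : ∀ x, Ψ (h x, q x) = x)
    (hright : ∀ p, (h (Ψ p), q (Ψ p)) = p)
    -- (i) uniform full rank
    (mlow : ℝ) (hmlow : 0 < mlow)
    (hcoerc : ∀ (x : EuclideanSpace ℝ (Fin n)) (v : EuclideanSpace ℝ (Fin m)),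
      ⟪(ContinuousLinearMap.adjoint (fderiv ℝ h x)) v,
        (ContinuousLinearMap.adjoint (fderiv ℝ h x)) v⟫ ≥ mlow * ‖v‖ ^ 2)
    (hinv : ∀ x, IsUnit ((fderiv ℝ h x) ∘L (ContinuousLinearMap.adjoint (fderiv ℝ h x))))
    -- (ii) uniform upper bound on the Gram map
    (mup : ℝ)
    (hmup : ∀ x, ‖(fderiv ℝ h x) ∘L (ContinuousLinearMap.adjoint (fderiv ℝ h x))‖ ≤ mup)
    -- (iii) the least-squares multiplier map φ is globally Lipschitz with constant L₂
    (L₂ : ℝ)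
    (hφLip : ∀ x₁ x₂ : EuclideanSpace ℝ (Fin n),
      ‖(-(Ring.inverse ((fderiv ℝ h x₁) ∘L (ContinuousLinearMap.adjoint (fderiv ℝ h x₁)))
            ((fderiv ℝ h x₁) (gradient f x₁))))
        - (-(Ring.inverse ((fderiv ℝ h x₂) ∘L (ContinuousLinearMap.adjoint (fderiv ℝ h x₂)))
            ((fderiv ℝ h x₂) (gradient f x₂))))‖ ≤ L₂ * ‖x₁ - x₂‖)
    -- (iv) Φ⁻¹ globally Lipschitz with constant L_Ψ (ℓ² product norm)
    (LΨ : ℝ)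
    (hΨLip : ∀ p p' : EuclideanSpace ℝ (Fin m) × EuclideanSpace ℝ (Fin (n - m)),
      ‖Ψ p - Ψ p'‖ ≤ LΨ * Real.sqrt (‖p.1 - p'.1‖ ^ 2 + ‖p.2 - p'.2‖ ^ 2))
    (ηstar : EuclideanSpace ℝ (Fin (n - m)))
    (xstar : EuclideanSpace ℝ (Fin n)) (hxstar : xstar = Ψ (0, ηstar))
    (lamstar : EuclideanSpace ℝ (Fin m))
    (hlamstar : lamstar = -(Ring.inverse ((fderiv ℝ h xstar) ∘L (ContinuousLinearMap.adjoint (fderiv ℝ h xstar)))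
      ((fderiv ℝ h xstar) (gradient f xstar)))) :
    ∀ (y : EuclideanSpace ℝ (Fin m)) (η : EuclideanSpace ℝ (Fin (n - m))),
      ‖(fderiv ℝ h (Ψ (y, η))) (gradient f (Ψ (y, η)))
        + ((fderiv ℝ h (Ψ (y, η))) ∘L (ContinuousLinearMap.adjoint (fderiv ℝ h (Ψ (y, η))))) lamstar‖
      ≤ mup * L₂ * LΨ * (‖y‖ + ‖η - ηstar‖) :=
  residual_lipschitz_bound_general n m hm hmn f h Ψ hinv mup hmup L₂ hφLip LΨ hΨLip ηstar xstar
    hxstar lamstar hlamstar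
end

section
/- Explicit lower bound on the Lyapunov matrix Ψ̄ (Appendix Lemma 3). Let H be a real symmetric m×m matrix with H ⪰ m̲·I for some m̲ > 0, and let k > 0 and k_p ≥ 2k/m̲. Then the 2m×2m block matrix Ψ̄ = [[H − (k/k_p)·I, H − m̲·I], [H − m̲·I, H]] satisfies Ψ̄ ⪰ (m̲/8)·I_{2m}, i.e., vᵀ Ψ̄ v ≥ (m̲/8)‖v‖² for all v ∈ ℝ^{2m}. -/
/-!
With `P = H - m̲ I ⪰ 0`, the matrix `Ψ̄ - (m̲/8) I` splits as the block matrix `[[P, P], [P, P]]`,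
which is `[I I]ᴴ P [I I] ⪰ 0`, plus the block-diagonal matrix with blocks
`(7m̲/8 - k/k_p) I` and `(7m̲/8) I`. The gain condition `k_p ≥ 2k/m̲` gives `k/k_p ≤ m̲/2`,
so both diagonal blocks are nonnegative multiples of `I`.
-/

open Matrix

namespace Matrix.PosSemidef

variable {m n R : Type*} [Fintype m] [Fintype n] [DecidableEq m] [DecidableEq n]
  [Ring R] [PartialOrder R] [StarRing R]

theorem fromBlocks_self {A : Matrix n n R} (hA : A.PosSemidef) :
    (fromBlocks A A A A).PosSemidef := by
  have := hA.conjTranspose_mul_mul_same (fromCols (1 : Matrix n n R) (1 : Matrix n n R))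
  rwa [conjTranspose_fromCols_eq_fromRows_conjTranspose, fromRows_mul, fromRows_mul_fromCols,
    conjTranspose_one, Matrix.one_mul, Matrix.mul_one] at this

theorem fromBlocks_zero_zero [AddLeftMono R] {A : Matrix m m R} {D : Matrix n n R}
    (hA : A.PosSemidef) (hD : D.PosSemidef) : (fromBlocks A 0 0 D).PosSemidef := by
  have := (hA.conjTranspose_mul_mul_same (fromCols (1 : Matrix m m R) (0 : Matrix m n R))).add
      (hD.conjTranspose_mul_mul_same (fromCols (0 : Matrix n m R) (1 : Matrix n n R)))
  rw [conjTranspose_fromCols_eq_fromRows_conjTranspose, fromRows_mul, fromRows_mul_fromCols,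
    conjTranspose_fromCols_eq_fromRows_conjTranspose, fromRows_mul, fromRows_mul_fromCols,
    fromBlocks_add] at this
  simpa using this

end Matrix.PosSemidef

theorem div_le_half_of_two_mul_div_le {K : Type*} [Field K] [LinearOrder K]
    [IsStrictOrderedRing K] {a b c : K} (ha : 0 < a) (hb : 0 < b) (h : 2 * b / a ≤ c) :
    b / c ≤ a / 2 := by
  have hc : 0 < c := (by positivity : 0 < 2 * b / a).trans_le h
  rw [div_le_iff₀ ha] at h
  rw [div_le_div_iff₀ hc two_pos]
  linarith

/-- Appendix Lemma 3: Explicit lower bound on the Lyapunov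
matrix `Ψ̄`. If `H ⪰ m̲ I`, `k > 0` and `k_p ≥ 2k/m̲`, then
`Ψ̄ = [[H - (k/k_p) I, H - m̲ I], [H - m̲ I, H]] ⪰ (m̲/8) I`. -/
theorem psi_bar_lower_bound
    (m : ℕ) (H : Matrix (Fin m) (Fin m) ℝ) (mlow k kp : ℝ)
    (hmlow : 0 < mlow) (hH : (H - mlow • 1).PosSemidef)
    (hk : 0 < k) (hkp : 2 * k / mlow ≤ kp) :
    ((Matrix.fromBlocks (H - (k / kp) • 1) (H - mlow • 1) (H - mlow • 1) H
      : Matrix (Fin m ⊕ Fin m) (Fin m ⊕ Fin m) ℝ)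
      - (mlow / 8) • 1).PosSemidef := by
  have hkkp := div_le_half_of_two_mul_div_le hmlow hk hkp
  have hsplit : (fromBlocks (H - (k / kp) • 1) (H - mlow • 1) (H - mlow • 1) H
        - (mlow / 8) • 1 : Matrix (Fin m ⊕ Fin m) (Fin m ⊕ Fin m) ℝ)
      = fromBlocks (H - mlow • 1) (H - mlow • 1) (H - mlow • 1) (H - mlow • 1)
        + fromBlocks ((7 * mlow / 8 - k / kp) • 1) 0 0 ((7 * mlow / 8) • 1) := by
    rw [← fromBlocks_one, fromBlocks_smul, fromBlocks_add, sub_eq_add_neg, fromBlocks_neg,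
      fromBlocks_add, fromBlocks_inj]
    refine ⟨?_, ?_, ?_, ?_⟩ <;> module
  rw [hsplit]
  exact hH.fromBlocks_self.add <| .fromBlocks_zero_zero (.smul .one (by linarith))
    (.smul .one (by linarith))
end

section
/- Global Lipschitz continuity of the inverse diffeomorphism (Proposition 1, inverse map). Let Φ : E → F₁ × F₂, Φ(x) = (h(x), q(x)), be a global C¹ diffeomorphism satisfying the orthonormality conditions, with ‖Dh(x)‖ ≤ B_h for all x, and suppose there is m̲ > 0 with ⟨Dh(x)†v, Dh(x)†v⟩ ≥ m̲‖v‖² for all x ∈ E, v ∈ F₁. Then the inverse map Φ⁻¹ : F₁ × F₂ → E is globally Lipschitz with constant B_h/m̲ + 1 with respect to the ℓ² product norm on F₁ × F₂. -/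
/-!
At `x = Ψ p`, the chain rule makes `M = DΨ(p)` a left inverse of `L = (Dh(x), Dq(x))`.
Write `A = Dh(x)`, `Q = Dq(x)`. The orthonormality conditions give
`L (A† a + Q† w) = (A A† a, w)`, and `A A†` is coercive, hence onto by Lax–Milgram; so
`M (v, w) = A† a + Q† w` with `A A† a = v`. Coercivity bounds `‖A† a‖ ≤ (B_h / m̲) ‖v‖`, and
`Q†` is an isometry, so `‖M‖ ≤ B_h / m̲ + 1`. The mean value inequality finishes, the
sup norm on the product being at most the ℓ² norm.
-/

open scoped RealInnerProductSpace
open ContinuousLinearMap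

section Operators

variable {E F G : Type*}
  [NormedAddCommGroup E] [InnerProductSpace ℝ E] [CompleteSpace E]
  [NormedAddCommGroup F] [InnerProductSpace ℝ F] [CompleteSpace F]
  [NormedAddCommGroup G] [InnerProductSpace ℝ G] [CompleteSpace G]

theorem norm_adjoint_apply_of_comp_adjoint_eq_id {Q : E →L[ℝ] G}
    (hQ : Q ∘L adjoint Q = ContinuousLinearMap.id ℝ G) (w : G) : ‖adjoint Q w‖ = ‖w‖ := by
  have hinner : ⟪adjoint Q w, adjoint Q w⟫ = ⟪w, w⟫ := by
    rw [adjoint_inner_left, ← comp_apply, hQ, id_apply]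
  rwa [real_inner_self_eq_norm_mul_norm, real_inner_self_eq_norm_mul_norm,
    mul_self_inj_of_nonneg (norm_nonneg _) (norm_nonneg _)] at hinner

theorem surjective_comp_adjoint_of_coercive {A : E →L[ℝ] F} {c : ℝ} (hc : 0 < c)
    (hA : ∀ v, c * ‖v‖ ^ 2 ≤ ⟪adjoint A v, adjoint A v⟫) :
    Function.Surjective (A ∘L adjoint A) := by
  have coercive : IsCoercive (innerSL ℝ ∘L (A ∘L adjoint A) : F →L[ℝ] F →L[ℝ] ℝ) := by
    refine ⟨c, hc, fun v => ?_⟩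
    have hv := hA v
    rw [adjoint_inner_left, real_inner_comm] at hv
    change c * ‖v‖ * ‖v‖ ≤ ⟪A (adjoint A v), v⟫
    nlinarith [hv]
  intro v
  refine ⟨coercive.continuousLinearEquivOfBilin.symm v, ext_inner_right ℝ fun w => ?_⟩
  have hLM := coercive.continuousLinearEquivOfBilin_apply
    (coercive.continuousLinearEquivOfBilin.symm v) w
  rw [ContinuousLinearEquiv.apply_symm_apply] at hLM
  exact hLM.symm

theorem norm_adjoint_apply_le_of_coercive {A : E →L[ℝ] F} {c : ℝ} (hc : 0 < c)
    {a : F} (hA : c * ‖a‖ ^ 2 ≤ ⟪adjoint A a, adjoint A a⟫) :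
    ‖adjoint A a‖ ≤ ‖A‖ / c * ‖A (adjoint A a)‖ := by
  have hbound : c * ‖a‖ ^ 2 ≤ ‖a‖ * ‖A (adjoint A a)‖ := by
    calc c * ‖a‖ ^ 2 ≤ ⟪adjoint A a, adjoint A a⟫ := hA
      _ = ⟪a, A (adjoint A a)⟫ := adjoint_inner_left A (adjoint A a) a
      _ ≤ ‖a‖ * ‖A (adjoint A a)‖ := real_inner_le_norm _ _
  have ha : ‖a‖ ≤ ‖A (adjoint A a)‖ / c := by
    rw [le_div_iff₀ hc]
    rcases (norm_nonneg a).eq_or_lt with h0 | h0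
    · rw [← h0, zero_mul]; positivity
    · nlinarith
  calc ‖adjoint A a‖ ≤ ‖adjoint A‖ * ‖a‖ := le_opNorm _ _
    _ = ‖A‖ * ‖a‖ := by rw [adjoint.norm_map]
    _ ≤ ‖A‖ * (‖A (adjoint A a)‖ / c) := by gcongr
    _ = ‖A‖ / c * ‖A (adjoint A a)‖ := by ring

theorem opNorm_le_of_comp_prod_eq_id {A : E →L[ℝ] F} {Q : E →L[ℝ] G} {M : F × G →L[ℝ] E}
    (hM : M ∘L A.prod Q = ContinuousLinearMap.id ℝ E)
    (hQQ : Q ∘L adjoint Q = ContinuousLinearMap.id ℝ G) (hQA : Q ∘L adjoint A = 0)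
    {B c : ℝ} (hAB : ‖A‖ ≤ B) (hc : 0 < c)
    (hA : ∀ v, c * ‖v‖ ^ 2 ≤ ⟪adjoint A v, adjoint A v⟫) :
    ‖M‖ ≤ B / c + 1 := by
  have hAQ : A ∘L adjoint Q = 0 := by
    simpa only [adjoint_comp, adjoint_adjoint, map_zero] using congrArg adjoint hQA
  have hB : 0 ≤ B / c := div_nonneg ((norm_nonneg A).trans hAB) hc.le
  refine opNorm_le_bound M (by positivity) fun u => ?_
  obtain ⟨a, ha⟩ := surjective_comp_adjoint_of_coercive hc hA u.1
  have hMu : M u = adjoint A a + adjoint Q u.2 := by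
    have hprod : A.prod Q (adjoint A a + adjoint Q u.2) = u := by
      ext
      · simpa [← comp_apply A (adjoint Q), hAQ] using ha
      · simp [← comp_apply Q, hQA, hQQ]
    simpa only [comp_apply, hprod, id_apply] using
      DFunLike.congr_fun hM (adjoint A a + adjoint Q u.2)
  have hAa : ‖adjoint A a‖ ≤ B / c * ‖u.1‖ := by
    calc ‖adjoint A a‖ ≤ ‖A‖ / c * ‖A (adjoint A a)‖ :=
          norm_adjoint_apply_le_of_coercive hc (hA a)
      _ ≤ B / c * ‖u.1‖ := by rw [← comp_apply A, ha]; gcongr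
  calc ‖M u‖ ≤ ‖adjoint A a‖ + ‖adjoint Q u.2‖ := hMu ▸ norm_add_le _ _
    _ ≤ B / c * ‖u.1‖ + ‖u.2‖ := by
      rw [norm_adjoint_apply_of_comp_adjoint_eq_id hQQ]; gcongr
    _ ≤ B / c * ‖u‖ + ‖u‖ := by gcongr; exacts [norm_fst_le u, norm_snd_le u]
    _ = (B / c + 1) * ‖u‖ := by ring

end Operators

theorem fderiv_comp_fderiv_prodMk_eq_id {𝕜 E F G : Type*} [NontriviallyNormedField 𝕜]
    [NormedAddCommGroup E] [NormedSpace 𝕜 E] [NormedAddCommGroup F] [NormedSpace 𝕜 F]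
    [NormedAddCommGroup G] [NormedSpace 𝕜 G]
    {h : E → F} {q : E → G} {Ψ : F × G → E} (hleft : ∀ x, Ψ (h x, q x) = x) {x : E}
    (hh : DifferentiableAt 𝕜 h x) (hq : DifferentiableAt 𝕜 q x)
    (hΨ : DifferentiableAt 𝕜 Ψ (h x, q x)) :
    fderiv 𝕜 Ψ (h x, q x) ∘L (fderiv 𝕜 h x).prod (fderiv 𝕜 q x) = ContinuousLinearMap.id 𝕜 E := by
  have hcomp : Ψ ∘ (fun y => (h y, q y)) = id := funext hleft
  rw [← hh.fderiv_prodMk hq, ← fderiv_comp x hΨ (hh.prodMk hq), hcomp, fderiv_id]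

theorem norm_le_sqrt_sq_add_sq {F G : Type*} [SeminormedAddCommGroup F] [SeminormedAddCommGroup G]
    (u : F × G) : ‖u‖ ≤ Real.sqrt (‖u.1‖ ^ 2 + ‖u.2‖ ^ 2) := by
  rw [Prod.norm_def]
  exact max_le (Real.le_sqrt_of_sq_le (le_add_of_nonneg_right (sq_nonneg _)))
    (Real.le_sqrt_of_sq_le (le_add_of_nonneg_left (sq_nonneg _)))

theorem inverse_diffeomorphism_lipschitz_general
    (n m : ℕ)
    (h : EuclideanSpace ℝ (Fin n) → EuclideanSpace ℝ (Fin m))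
    (q : EuclideanSpace ℝ (Fin n) → EuclideanSpace ℝ (Fin (n - m)))
    (Ψ : EuclideanSpace ℝ (Fin m) × EuclideanSpace ℝ (Fin (n - m)) → EuclideanSpace ℝ (Fin n))
    (hh : ContDiff ℝ 1 h) (hq : ContDiff ℝ 1 q) (hΨ : ContDiff ℝ 1 Ψ)
    (hleft : ∀ x, Ψ (h x, q x) = x)
    (hright : ∀ p, (h (Ψ p), q (Ψ p)) = p)
    (horth₁ : ∀ x, (fderiv ℝ q x) ∘L (ContinuousLinearMap.adjoint (fderiv ℝ q x))
      = ContinuousLinearMap.id ℝ (EuclideanSpace ℝ (Fin (n - m))))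
    (horth₂ : ∀ x, (fderiv ℝ q x) ∘L (ContinuousLinearMap.adjoint (fderiv ℝ h x)) = 0)
    (Bh : ℝ) (hBh : ∀ x, ‖fderiv ℝ h x‖ ≤ Bh)
    (mlow : ℝ) (hmlow : 0 < mlow)
    (hcoerc : ∀ (x : EuclideanSpace ℝ (Fin n)) (v : EuclideanSpace ℝ (Fin m)),
      ⟪(ContinuousLinearMap.adjoint (fderiv ℝ h x)) v,
        (ContinuousLinearMap.adjoint (fderiv ℝ h x)) v⟫ ≥ mlow * ‖v‖ ^ 2) :
    ∀ p p' : EuclideanSpace ℝ (Fin m) × EuclideanSpace ℝ (Fin (n - m)),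
      ‖Ψ p - Ψ p'‖ ≤ (Bh / mlow + 1) * Real.sqrt (‖p.1 - p'.1‖ ^ 2 + ‖p.2 - p'.2‖ ^ 2) := by
  have hΨd := hΨ.differentiable one_ne_zero
  have hderiv : ∀ p, ‖fderiv ℝ Ψ p‖ ≤ Bh / mlow + 1 := fun p => by
    have hid := fderiv_comp_fderiv_prodMk_eq_id hleft (hh.differentiable one_ne_zero (Ψ p))
      (hq.differentiable one_ne_zero (Ψ p)) (hΨd _)
    rw [hright] at hid
    exact opNorm_le_of_comp_prod_eq_id hid (horth₁ _) (horth₂ _) (hBh _) hmlow (hcoerc _)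
  intro p p'
  calc ‖Ψ p - Ψ p'‖ ≤ (Bh / mlow + 1) * ‖p - p'‖ :=
        convex_univ.norm_image_sub_le_of_norm_fderiv_le (fun y _ => hΨd y) (fun y _ => hderiv y)
          (Set.mem_univ p') (Set.mem_univ p)
    _ ≤ (Bh / mlow + 1) * Real.sqrt (‖p.1 - p'.1‖ ^ 2 + ‖p.2 - p'.2‖ ^ 2) :=
        mul_le_mul_of_nonneg_left (norm_le_sqrt_sq_add_sq (p - p'))
          ((norm_nonneg _).trans (hderiv p))

/-- Proposition 1, inverse map: Global Lipschitz continuity of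
the inverse diffeomorphism `Φ⁻¹` with constant `B_h/m̲ + 1` with respect to the ℓ²
product norm on `F₁ × F₂`. -/
theorem inverse_diffeomorphism_lipschitz
    (n m : ℕ) (hm : 1 ≤ m) (hmn : m < n)
    (h : EuclideanSpace ℝ (Fin n) → EuclideanSpace ℝ (Fin m))
    (q : EuclideanSpace ℝ (Fin n) → EuclideanSpace ℝ (Fin (n - m)))
    (Ψ : EuclideanSpace ℝ (Fin m) × EuclideanSpace ℝ (Fin (n - m)) → EuclideanSpace ℝ (Fin n))
    (hh : ContDiff ℝ 1 h) (hq : ContDiff ℝ 1 q) (hΨ : ContDiff ℝ 1 Ψ)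
    (hleft : ∀ x, Ψ (h x, q x) = x)
    (hright : ∀ p, (h (Ψ p), q (Ψ p)) = p)
    (horth₁ : ∀ x, (fderiv ℝ q x) ∘L (ContinuousLinearMap.adjoint (fderiv ℝ q x))
      = ContinuousLinearMap.id ℝ (EuclideanSpace ℝ (Fin (n - m))))
    (horth₂ : ∀ x, (fderiv ℝ q x) ∘L (ContinuousLinearMap.adjoint (fderiv ℝ h x)) = 0)
    (Bh : ℝ) (hBh : ∀ x, ‖fderiv ℝ h x‖ ≤ Bh)
    (mlow : ℝ) (hmlow : 0 < mlow)
    (hcoerc : ∀ (x : EuclideanSpace ℝ (Fin n)) (v : EuclideanSpace ℝ (Fin m)),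
      ⟪(ContinuousLinearMap.adjoint (fderiv ℝ h x)) v,
        (ContinuousLinearMap.adjoint (fderiv ℝ h x)) v⟫ ≥ mlow * ‖v‖ ^ 2) :
    ∀ p p' : EuclideanSpace ℝ (Fin m) × EuclideanSpace ℝ (Fin (n - m)),
      ‖Ψ p - Ψ p'‖ ≤ (Bh / mlow + 1) * Real.sqrt (‖p.1 - p'.1‖ ^ 2 + ‖p.2 - p'.2‖ ^ 2) :=
  inverse_diffeomorphism_lipschitz_general n m h q Ψ hh hq hΨ hleft hright horth₁ horth₂ Bh hBh mlow
    hmlow hcoerc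
end

section
/- Sufficient condition for the transverse Lipschitz bound (Proposition 2, conclusion). Let Φ : E → F₁ × F₂, Φ(x) = (h(x), q(x)), be a global C¹ diffeomorphism whose inverse is globally Lipschitz with constant L_Ψ, with Dq(x)∘Dq(x)† = id_{F₂} for all x (so ‖Dq(x)‖ = 1). Let f : E → ℝ be differentiable with ‖∇f(x)‖ ≤ B_f for all x and with ∇f globally Lipschitz with constant L_f, and suppose the map x ↦ Dq(x) is globally Lipschitz with constant L_q in the operator norm. Then for all (y, η) ∈ F₁ × F₂, with x̃ = Φ⁻¹(y, η) and p̂ = Φ⁻¹(0, η), ‖Dq(x̃)(∇f(x̃)) − Dq(p̂)(∇f(p̂))‖ ≤ L_Ψ (L_q B_f + L_f) ‖y‖. -/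
/-- Proposition 2, conclusion: Sufficient condition for the
transverse Lipschitz bound. With `Φ⁻¹` globally `L_Ψ`-Lipschitz, `Dq` orthonormal,
`‖∇f‖ ≤ B_f`, `∇f` globally `L_f`-Lipschitz and `x ↦ Dq(x)` globally `L_q`-Lipschitz,
one has `‖Dq(x̃)(∇f(x̃)) - Dq(p̂)(∇f(p̂))‖ ≤ L_Ψ (L_q B_f + L_f) ‖y‖` for
`x̃ = Φ⁻¹(y,η)`, `p̂ = Φ⁻¹(0,η)`. -/
theorem transverse_lipschitz_bound_sufficient
    (n m : ℕ) (hm : 1 ≤ m) (hmn : m < n)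
    (f : EuclideanSpace ℝ (Fin n) → ℝ)
    (h : EuclideanSpace ℝ (Fin n) → EuclideanSpace ℝ (Fin m))
    (q : EuclideanSpace ℝ (Fin n) → EuclideanSpace ℝ (Fin (n - m)))
    (Ψ : EuclideanSpace ℝ (Fin m) × EuclideanSpace ℝ (Fin (n - m)) → EuclideanSpace ℝ (Fin n))
    (hh : ContDiff ℝ 1 h) (hq : ContDiff ℝ 1 q) (hΨ : ContDiff ℝ 1 Ψ)
    (hleft : ∀ x, Ψ (h x, q x) = x)
    (hright : ∀ p, (h (Ψ p), q (Ψ p)) = p)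
    (horth₁ : ∀ x, (fderiv ℝ q x) ∘L (ContinuousLinearMap.adjoint (fderiv ℝ q x))
      = ContinuousLinearMap.id ℝ (EuclideanSpace ℝ (Fin (n - m))))
    (LΨ : ℝ)
    (hΨLip : ∀ p p' : EuclideanSpace ℝ (Fin m) × EuclideanSpace ℝ (Fin (n - m)),
      ‖Ψ p - Ψ p'‖ ≤ LΨ * Real.sqrt (‖p.1 - p'.1‖ ^ 2 + ‖p.2 - p'.2‖ ^ 2))
    (hf : Differentiable ℝ f)
    (Bf : ℝ) (hBf : ∀ x, ‖gradient f x‖ ≤ Bf)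
    (Lf : ℝ) (hLf : ∀ x x' : EuclideanSpace ℝ (Fin n),
      ‖gradient f x - gradient f x'‖ ≤ Lf * ‖x - x'‖)
    (Lq : ℝ) (hLq : ∀ x x' : EuclideanSpace ℝ (Fin n),
      ‖fderiv ℝ q x - fderiv ℝ q x'‖ ≤ Lq * ‖x - x'‖) :
    ∀ (y : EuclideanSpace ℝ (Fin m)) (η : EuclideanSpace ℝ (Fin (n - m))),
      ‖(fderiv ℝ q (Ψ (y, η))) (gradient f (Ψ (y, η)))
        - (fderiv ℝ q (Ψ (0, η))) (gradient f (Ψ (0, η)))‖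
      ≤ LΨ * (Lq * Bf + Lf) * ‖y‖ := by

  intro y η
  set x := Ψ (y, η) with hx
  set p := Ψ (0, η) with hp
  -- nonnegativity of constants
  have hn1 : (1 : ℕ) ≤ n := le_of_lt (lt_of_le_of_lt hm hmn)
  have hBf0 : (0:ℝ) ≤ Bf := le_trans (norm_nonneg _) (hBf 0)
  have hex : ∃ z : EuclideanSpace ℝ (Fin n), ‖z‖ = 1 := by
    refine ⟨EuclideanSpace.single ⟨0, hn1⟩ 1, ?_⟩
    simp [EuclideanSpace.norm_single]
  obtain ⟨z, hz⟩ := hex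
  have hLq0 : (0:ℝ) ≤ Lq := by
    have := hLq z 0
    simp [hz] at this
    exact le_trans (norm_nonneg _) this
  have hLf0 : (0:ℝ) ≤ Lf := by
    have := hLf z 0
    simp [hz] at this
    exact le_trans (norm_nonneg _) this
  -- distance bound
  have hxp : ‖x - p‖ ≤ LΨ * ‖y‖ := by
    have := hΨLip (y, η) (0, η)
    simpa [Real.sqrt_sq (norm_nonneg y)] using this
  -- operator norm bound ‖Dq x‖ ≤ 1
  have hDq : ∀ w : EuclideanSpace ℝ (Fin n), ‖fderiv ℝ q w‖ ≤ 1 := by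
    intro w
    set A := fderiv ℝ q w with hA
    have hadj : ‖ContinuousLinearMap.adjoint A‖ ≤ 1 := by
      refine ContinuousLinearMap.opNorm_le_bound _ zero_le_one (fun v => ?_)
      have hsq : ‖(ContinuousLinearMap.adjoint A) v‖ ^ 2 = ‖v‖ ^ 2 := by
        rw [← real_inner_self_eq_norm_sq, ← real_inner_self_eq_norm_sq]
        have := ContinuousLinearMap.adjoint_inner_left A ((ContinuousLinearMap.adjoint A) v) v
        rw [real_inner_comm] at this
        rw [this]
        have h2 := congrArg (fun T : EuclideanSpace ℝ (Fin (n-m)) →L[ℝ] EuclideanSpace ℝ (Fin (n-m)) => T v) (horth₁ w)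
        simp only [ContinuousLinearMap.comp_apply, ContinuousLinearMap.id_apply] at h2
        rw [← hA] at h2
        rw [h2]
      nlinarith [norm_nonneg ((ContinuousLinearMap.adjoint A) v), norm_nonneg v]
    calc ‖A‖ = ‖ContinuousLinearMap.adjoint (ContinuousLinearMap.adjoint A)‖ := by
            rw [ContinuousLinearMap.adjoint_adjoint]
      _ = ‖ContinuousLinearMap.adjoint A‖ :=
            LinearIsometryEquiv.norm_map ContinuousLinearMap.adjoint (ContinuousLinearMap.adjoint A)
      _ ≤ 1 := hadj
  -- main estimate
  have key : (fderiv ℝ q x) (gradient f x) - (fderiv ℝ q p) (gradient f p)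
      = (fderiv ℝ q x - fderiv ℝ q p) (gradient f x)
        + (fderiv ℝ q p) (gradient f x - gradient f p) := by
    simp [ContinuousLinearMap.sub_apply, map_sub]
  rw [key]
  have t1 : ‖(fderiv ℝ q x - fderiv ℝ q p) (gradient f x)‖ ≤ Lq * ‖x - p‖ * Bf := by
    calc ‖(fderiv ℝ q x - fderiv ℝ q p) (gradient f x)‖
        ≤ ‖fderiv ℝ q x - fderiv ℝ q p‖ * ‖gradient f x‖ :=
          ContinuousLinearMap.le_opNorm _ _
      _ ≤ (Lq * ‖x - p‖) * Bf := by
          apply mul_le_mul (hLq x p) (hBf x) (norm_nonneg _)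
          positivity
  have t2 : ‖(fderiv ℝ q p) (gradient f x - gradient f p)‖ ≤ Lf * ‖x - p‖ := by
    calc ‖(fderiv ℝ q p) (gradient f x - gradient f p)‖
        ≤ ‖fderiv ℝ q p‖ * ‖gradient f x - gradient f p‖ :=
          ContinuousLinearMap.le_opNorm _ _
      _ ≤ 1 * (Lf * ‖x - p‖) := by
          apply mul_le_mul (hDq p) (hLf x p) (norm_nonneg _) zero_le_one
      _ = Lf * ‖x - p‖ := one_mul _
  have hsum : ‖(fderiv ℝ q x - fderiv ℝ q p) (gradient f x)
      + (fderiv ℝ q p) (gradient f x - gradient f p)‖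
      ≤ (Lq * Bf + Lf) * ‖x - p‖ := by
    calc _ ≤ ‖(fderiv ℝ q x - fderiv ℝ q p) (gradient f x)‖
            + ‖(fderiv ℝ q p) (gradient f x - gradient f p)‖ := norm_add_le _ _
      _ ≤ Lq * ‖x - p‖ * Bf + Lf * ‖x - p‖ := add_le_add t1 t2
      _ = (Lq * Bf + Lf) * ‖x - p‖ := by ring
  refine hsum.trans ?_
  have hc : (0:ℝ) ≤ Lq * Bf + Lf := by positivity
  calc (Lq * Bf + Lf) * ‖x - p‖ ≤ (Lq * Bf + Lf) * (LΨ * ‖y‖) :=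
        mul_le_mul_of_nonneg_left hxp hc
    _ = LΨ * (Lq * Bf + Lf) * ‖y‖ := by ring
end

section
/- Global Lipschitz continuity of the least-squares multiplier map (Proposition 3). Let f : E → ℝ and h : E → F₁ be differentiable and assume: (i) there exists m̲ > 0 with ⟨Dh(x)†v, Dh(x)†v⟩ ≥ m̲‖v‖² for all x ∈ E, v ∈ F₁ (so H(x) := Dh(x)∘Dh(x)† is invertible); (ii) ‖∇f(x)‖ ≤ B_f and ‖Dh(x)‖ ≤ B_h for all x; (iii) ∇f is globally Lipschitz with constant L_f and x ↦ Dh(x) is globally Lipschitz with constant L_h in the operator norm. Then the map φ(x) = −H(x)⁻¹( Dh(x)(∇f(x)) ) is globally Lipschitz with constant (B_h L_f + L_h B_f)/m̲ + 2 B_h² L_h B_f / m̲². -/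
open scoped RealInnerProductSpace

set_option maxHeartbeats 1000000 in
/-- Proposition 3: Global Lipschitz continuity of the
least-squares multiplier map `φ(x) = -H(x)⁻¹ (Dh(x)(∇f(x)))`,
`H(x) = Dh(x) ∘ Dh(x)†`, with explicit constant
`(B_h L_f + L_h B_f)/m̲ + 2 B_h² L_h B_f / m̲²`. -/
theorem multiplier_map_lipschitz
    (n m : ℕ) (hm : 1 ≤ m) (hmn : m < n)
    (f : EuclideanSpace ℝ (Fin n) → ℝ)
    (h : EuclideanSpace ℝ (Fin n) → EuclideanSpace ℝ (Fin m))
    (hf : Differentiable ℝ f) (hh : Differentiable ℝ h)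
    -- (i) uniform full rank
    (mlow : ℝ) (hmlow : 0 < mlow)
    (hcoerc : ∀ (x : EuclideanSpace ℝ (Fin n)) (v : EuclideanSpace ℝ (Fin m)),
      ⟪(ContinuousLinearMap.adjoint (fderiv ℝ h x)) v,
        (ContinuousLinearMap.adjoint (fderiv ℝ h x)) v⟫ ≥ mlow * ‖v‖ ^ 2)
    (hinv : ∀ x, IsUnit ((fderiv ℝ h x) ∘L (ContinuousLinearMap.adjoint (fderiv ℝ h x))))
    -- (ii) uniform bounds
    (Bf Bh : ℝ) (hBf : ∀ x, ‖gradient f x‖ ≤ Bf) (hBh : ∀ x, ‖fderiv ℝ h x‖ ≤ Bh)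
    -- (iii) Lipschitz continuity of the derivatives
    (Lf : ℝ) (hLf : ∀ x x' : EuclideanSpace ℝ (Fin n),
      ‖gradient f x - gradient f x'‖ ≤ Lf * ‖x - x'‖)
    (Lh : ℝ) (hLh : ∀ x x' : EuclideanSpace ℝ (Fin n),
      ‖fderiv ℝ h x - fderiv ℝ h x'‖ ≤ Lh * ‖x - x'‖) :
    ∀ x₁ x₂ : EuclideanSpace ℝ (Fin n),
      ‖(-(Ring.inverse ((fderiv ℝ h x₁) ∘L (ContinuousLinearMap.adjoint (fderiv ℝ h x₁)))
            ((fderiv ℝ h x₁) (gradient f x₁))))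
        - (-(Ring.inverse ((fderiv ℝ h x₂) ∘L (ContinuousLinearMap.adjoint (fderiv ℝ h x₂)))
            ((fderiv ℝ h x₂) (gradient f x₂))))‖
      ≤ ((Bh * Lf + Lh * Bf) / mlow + 2 * Bh ^ 2 * Lh * Bf / mlow ^ 2) * ‖x₁ - x₂‖ := by
  -- basic nonnegativity facts
  have hn : 0 < n := by omega
  have hBf0 : 0 ≤ Bf := le_trans (norm_nonneg _) (hBf 0)
  have hBh0 : 0 ≤ Bh := le_trans (norm_nonneg _) (hBh 0)
  set e : EuclideanSpace ℝ (Fin n) := EuclideanSpace.single ⟨0, hn⟩ (1 : ℝ) with he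
  have hene : ‖e - 0‖ = 1 := by
    simp [he, EuclideanSpace.norm_single]
  have hLf0 : 0 ≤ Lf := by
    have := hLf e 0
    rw [hene, mul_one] at this
    exact le_trans (norm_nonneg _) this
  have hLh0 : 0 ≤ Lh := by
    have := hLh e 0
    rw [hene, mul_one] at this
    exact le_trans (norm_nonneg _) this
  intro x₁ x₂
  set A₁ := fderiv ℝ h x₁ with hA₁
  set A₂ := fderiv ℝ h x₂ with hA₂
  set H₁ := A₁ ∘L (ContinuousLinearMap.adjoint A₁) with hH₁
  set H₂ := A₂ ∘L (ContinuousLinearMap.adjoint A₂) with hH₂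
  set G₁ := Ring.inverse H₁ with hG₁
  set G₂ := Ring.inverse H₂ with hG₂
  set g₁ := gradient f x₁ with hg₁
  set g₂ := gradient f x₂ with hg₂
  set d := ‖x₁ - x₂‖ with hd
  have hd0 : 0 ≤ d := norm_nonneg _
  -- inverse norm bounds
  have key : ∀ (x : EuclideanSpace ℝ (Fin n)) (w : EuclideanSpace ℝ (Fin m)),
      ‖Ring.inverse ((fderiv ℝ h x) ∘L (ContinuousLinearMap.adjoint (fderiv ℝ h x))) w‖
        ≤ mlow⁻¹ * ‖w‖ := by
    intro x w
    set A := fderiv ℝ h x with hA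
    set H := A ∘L (ContinuousLinearMap.adjoint A) with hHdef
    set v := Ring.inverse H w with hv
    have hHv : A ((ContinuousLinearMap.adjoint A) v) = w := by
      have h1 : H * Ring.inverse H = 1 := Ring.mul_inverse_cancel _ (hinv x)
      have h2 := DFunLike.congr_fun h1 w
      simpa [ContinuousLinearMap.mul_apply, hHdef] using h2
    have h4 : ⟪(ContinuousLinearMap.adjoint A) v, (ContinuousLinearMap.adjoint A) v⟫
        = ⟪w, v⟫ := by
      rw [ContinuousLinearMap.adjoint_inner_left, hHv, real_inner_comm]
    have h3 := hcoerc x v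
    rw [← hA] at h3
    rw [h4] at h3
    have h2 : mlow * ‖v‖ ^ 2 ≤ ‖w‖ * ‖v‖ :=
      le_trans h3 (real_inner_le_norm w v)
    rcases eq_or_lt_of_le (norm_nonneg v) with hv0 | hv0
    · rw [← hv0]
      positivity
    · have h5 : mlow * ‖v‖ ≤ ‖w‖ := by nlinarith
      rw [inv_mul_eq_div, le_div_iff₀ hmlow]
      linarith
  -- the images under the inverse we need
  have hG₁w : ∀ w, ‖G₁ w‖ ≤ mlow⁻¹ * ‖w‖ := fun w => key x₁ w
  have hG₂w : ∀ w, ‖G₂ w‖ ≤ mlow⁻¹ * ‖w‖ := fun w => key x₂ w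
  -- algebraic identity
  have hG₁H₁ : ∀ v, G₁ (H₁ v) = v := by
    intro v
    have h1 : G₁ * H₁ = 1 := Ring.inverse_mul_cancel _ (hinv x₁)
    have := DFunLike.congr_fun h1 v
    simpa [ContinuousLinearMap.mul_apply] using this
  have hH₂G₂ : ∀ v, H₂ (G₂ v) = v := by
    intro v
    have h1 : H₂ * G₂ = 1 := Ring.mul_inverse_cancel _ (hinv x₂)
    have := DFunLike.congr_fun h1 v
    simpa [ContinuousLinearMap.mul_apply] using this
  have hident : G₁ (A₁ g₁) - G₂ (A₂ g₂)
      = G₁ ((A₁ g₁ - A₂ g₂) + (H₂ - H₁) (G₂ (A₂ g₂))) := by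
    have : G₁ ((A₁ g₁ - A₂ g₂) + (H₂ - H₁) (G₂ (A₂ g₂)))
        = G₁ (A₁ g₁) - G₁ (A₂ g₂) + (G₁ (H₂ (G₂ (A₂ g₂))) - G₁ (H₁ (G₂ (A₂ g₂)))) := by
      simp only [map_add, map_sub, ContinuousLinearMap.sub_apply]
    rw [this, hH₂G₂, hG₁H₁]
    abel
  -- bound on A₁ g₁ - A₂ g₂
  have hb : ‖A₁ g₁ - A₂ g₂‖ ≤ Bh * (Lf * d) + Lh * d * Bf := by
    have : A₁ g₁ - A₂ g₂ = A₁ (g₁ - g₂) + (A₁ - A₂) g₂ := by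
      simp only [map_sub, ContinuousLinearMap.sub_apply]; abel
    rw [this]
    refine le_trans (norm_add_le _ _) (add_le_add ?_ ?_)
    · exact le_trans (ContinuousLinearMap.le_opNorm _ _)
        (mul_le_mul (hBh x₁) (hLf x₁ x₂) (norm_nonneg _) hBh0)
    · exact le_trans (ContinuousLinearMap.le_opNorm _ _)
        (mul_le_mul (hLh x₁ x₂) (hBf x₂) (norm_nonneg _) (by positivity))
  -- bound on H₂ - H₁
  have hadj : ‖ContinuousLinearMap.adjoint A₁ - ContinuousLinearMap.adjoint A₂‖ ≤ Lh * d := by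
    have : ContinuousLinearMap.adjoint A₁ - ContinuousLinearMap.adjoint A₂
        = ContinuousLinearMap.adjoint (A₁ - A₂) := (map_sub _ _ _).symm
    rw [this, LinearIsometryEquiv.norm_map]
    exact hLh x₁ x₂
  have hH : ‖H₂ - H₁‖ ≤ 2 * Bh * (Lh * d) := by
    have hdec : H₂ - H₁ = A₂ ∘L (ContinuousLinearMap.adjoint A₂ - ContinuousLinearMap.adjoint A₁)
        + (A₂ - A₁) ∘L (ContinuousLinearMap.adjoint A₁) := by
      refine ContinuousLinearMap.ext fun v => ?_
      simp only [ContinuousLinearMap.sub_apply, ContinuousLinearMap.add_apply,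
        ContinuousLinearMap.comp_apply, map_sub, hH₁, hH₂]
      abel
    rw [hdec]
    refine le_trans (norm_add_le _ _) ?_
    have h1 : ‖A₂ ∘L (ContinuousLinearMap.adjoint A₂ - ContinuousLinearMap.adjoint A₁)‖
        ≤ Bh * (Lh * d) := by
      refine le_trans (ContinuousLinearMap.opNorm_comp_le _ _) ?_
      have : ‖ContinuousLinearMap.adjoint A₂ - ContinuousLinearMap.adjoint A₁‖ ≤ Lh * d := by
        rw [norm_sub_rev]; exact hadj
      exact mul_le_mul (hBh x₂) this (norm_nonneg _) hBh0
    have h2 : ‖(A₂ - A₁) ∘L (ContinuousLinearMap.adjoint A₁)‖ ≤ (Lh * d) * Bh := by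
      refine le_trans (ContinuousLinearMap.opNorm_comp_le _ _) ?_
      have hnadj : ‖ContinuousLinearMap.adjoint A₁‖ = ‖A₁‖ := LinearIsometryEquiv.norm_map _ _
      have : ‖A₂ - A₁‖ ≤ Lh * d := by rw [norm_sub_rev]; exact hLh x₁ x₂
      rw [hnadj]
      exact mul_le_mul this (hBh x₁) (norm_nonneg _) (by positivity)
    linarith
  -- bound on G₂ (A₂ g₂)
  have hGb : ‖G₂ (A₂ g₂)‖ ≤ mlow⁻¹ * (Bh * Bf) := by
    refine le_trans (hG₂w _) ?_
    have : ‖A₂ g₂‖ ≤ Bh * Bf := le_trans (ContinuousLinearMap.le_opNorm _ _)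
      (mul_le_mul (hBh x₂) (hBf x₂) (norm_nonneg _) hBh0)
    exact mul_le_mul_of_nonneg_left this (by positivity)
  -- combine
  have hmain : ‖G₁ (A₁ g₁) - G₂ (A₂ g₂)‖
      ≤ mlow⁻¹ * ((Bh * (Lf * d) + Lh * d * Bf) + 2 * Bh * (Lh * d) * (mlow⁻¹ * (Bh * Bf))) := by
    rw [hident]
    refine le_trans (hG₁w _) ?_
    refine mul_le_mul_of_nonneg_left ?_ (by positivity)
    refine le_trans (norm_add_le _ _) (add_le_add hb ?_)
    refine le_trans (ContinuousLinearMap.le_opNorm _ _) ?_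
    exact mul_le_mul hH hGb (norm_nonneg _) (by positivity)
  have hEq : ‖(-(G₁ (A₁ g₁))) - (-(G₂ (A₂ g₂)))‖ = ‖G₁ (A₁ g₁) - G₂ (A₂ g₂)‖ := by
    rw [show (-(G₁ (A₁ g₁))) - (-(G₂ (A₂ g₂))) = -(G₁ (A₁ g₁) - G₂ (A₂ g₂)) by abel,
      norm_neg]
  calc ‖(-(G₁ (A₁ g₁))) - (-(G₂ (A₂ g₂)))‖
      = ‖G₁ (A₁ g₁) - G₂ (A₂ g₂)‖ := hEq
    _ ≤ mlow⁻¹ * ((Bh * (Lf * d) + Lh * d * Bf)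
          + 2 * Bh * (Lh * d) * (mlow⁻¹ * (Bh * Bf))) := hmain
    _ = ((Bh * Lf + Lh * Bf) / mlow + 2 * Bh ^ 2 * Lh * Bf / mlow ^ 2) * d := by
        field_simp
end
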